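/- arXiv:2306.14825 — 3 statements merged into one kernel-verified Lean document; each statement's English description precedes it below -/
import Mathlib

section
/- Subcritical case of Proposition 1: Let s : ℝ → ℝ → ℝ be continuous and bounded with s(0,0) = 1, let z₁, z₂ > 0, let x, y ≥ 0, and let the exponents satisfy 0 < χ < min(χ₁, χ₂). Then lim_{ε→0⁺} s̃_ε(x,y) = 1. -/
open Real MeasureTheory Filter Set Topology

/-- The rescaled Laplace transform `s̃_ε(x,y)` of the mode coupling theory. -/
noncomputable def stildeEps (s : ℝ → ℝ → ℝ) (z₁ z₂ χ χ₁ χ₂ x y ε : ℝ) : ℝ :=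
  ∫ τ in Ioi (0:ℝ),
    Real.exp (-τ) * s ((ε ^ (χ₁ - χ) * x * τ) ^ (1 / z₁)) ((ε ^ (χ₂ - χ) * y * τ) ^ (1 / z₂))

/-! The weight `e^{-τ}` is a probability density on `(0, ∞)`, so a uniformly bounded family
converging pointwise to `L` has weighted averages converging to `L` by dominated convergence.
In the subcritical regime both arguments of `s` in `s̃_ε` are positive powers of `ε` times
constants, so the integrand tends to `e^{-τ} s(0,0) = e^{-τ}` pointwise. -/

theorem tendsto_setIntegral_exp_neg_mul {ι : Type*} {l : Filter ι} [l.IsCountablyGenerated]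
    {g : ι → ℝ → ℝ} {C L : ℝ}
    (hmeas : ∀ᶠ i in l, AEStronglyMeasurable (g i) (volume.restrict (Ioi 0)))
    (hbound : ∀ i τ, |g i τ| ≤ C) (hlim : ∀ τ, Tendsto (fun i => g i τ) l (𝓝 L)) :
    Tendsto (fun i => ∫ τ in Ioi (0 : ℝ), exp (-τ) * g i τ) l (𝓝 L) := by
  have hL : ∫ τ in Ioi (0 : ℝ), exp (-τ) * L = L := by
    rw [integral_mul_const, integral_exp_neg_Ioi_zero, one_mul]
  rw [← hL]
  refine tendsto_integral_filter_of_dominated_convergence (fun τ => C * exp (-τ)) ?_ ?_ ?_ ?_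
  · filter_upwards [hmeas] with i hi
    exact (continuous_exp.comp continuous_neg).aestronglyMeasurable.mul hi
  · filter_upwards with i
    filter_upwards with τ
    rw [norm_mul, norm_of_nonneg (exp_pos _).le, mul_comm]
    exact mul_le_mul_of_nonneg_right (hbound i τ) (exp_pos _).le
  · simpa using (exp_neg_integrableOn_Ioi 0 one_pos).const_mul C
  · exact Eventually.of_forall fun τ => (hlim τ).const_mul _

theorem tendsto_rpow_mul_mul_rpow_nhds_zero {a p : ℝ} (ha : 0 < a) (hp : 0 < p) (c d : ℝ) :
    Tendsto (fun ε : ℝ => (ε ^ a * c * d) ^ p) (𝓝 0) (𝓝 0) := by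
  have hpow : Tendsto (fun ε : ℝ => ε ^ a * c * d) (𝓝 0) (𝓝 0) := by
    simpa using ((tendsto_id.rpow_const_nhds_zero ha).mul_const c).mul_const d
  exact hpow.rpow_const_nhds_zero hp

theorem prop1_subcritical_general (s : ℝ → ℝ → ℝ)
    (hcont : Continuous fun p : ℝ × ℝ => s p.1 p.2)
    (hbdd : ∃ C : ℝ, ∀ u v : ℝ, |s u v| ≤ C)
    (hs00 : s 0 0 = 1)
    (z₁ z₂ : ℝ) (hz₁ : 0 < z₁) (hz₂ : 0 < z₂)
    (x y : ℝ)
    (χ χ₁ χ₂ : ℝ) (hχ₁ : χ < χ₁) (hχ₂ : χ < χ₂) :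
    Tendsto (fun ε : ℝ => stildeEps s z₁ z₂ χ χ₁ χ₂ x y ε) (𝓝[>] 0) (𝓝 1) := by
  obtain ⟨C, hC⟩ := hbdd
  refine tendsto_setIntegral_exp_neg_mul (C := C) ?_ (fun _ _ => hC _ _) fun τ => ?_
  · refine Eventually.of_forall fun ε => Continuous.aestronglyMeasurable ?_
    have hroot : ∀ {c z : ℝ}, 0 < z → Continuous fun τ : ℝ => (c * τ) ^ (1 / z) := fun hz =>
      (continuous_const_mul _).rpow_const fun _ => Or.inr (by positivity)
    exact hcont.comp ((hroot hz₁).prodMk (hroot hz₂))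
  · rw [← hs00]
    refine ((hcont.tendsto (0, 0)).comp (Tendsto.prodMk_nhds ?_ ?_)).mono_left nhdsWithin_le_nhds
    · exact tendsto_rpow_mul_mul_rpow_nhds_zero (sub_pos.2 hχ₁) (by positivity) x τ
    · exact tendsto_rpow_mul_mul_rpow_nhds_zero (sub_pos.2 hχ₂) (by positivity) y τ

/-- Subcritical case of Proposition 1: for `0 < χ < min (χ₁, χ₂)`,
`lim_{ε→0⁺} s̃_ε(x,y) = 1`. -/
theorem prop1_subcritical (s : ℝ → ℝ → ℝ)
    (hcont : Continuous fun p : ℝ × ℝ => s p.1 p.2)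
    (hbdd : ∃ C : ℝ, ∀ u v : ℝ, |s u v| ≤ C)
    (hs00 : s 0 0 = 1)
    (z₁ z₂ : ℝ) (hz₁ : 0 < z₁) (hz₂ : 0 < z₂)
    (x y : ℝ) (hx : 0 ≤ x) (hy : 0 ≤ y)
    (χ χ₁ χ₂ : ℝ) (hχ : 0 < χ) (hχ₁ : χ < χ₁) (hχ₂ : χ < χ₂) :
    Tendsto (fun ε : ℝ => stildeEps s z₁ z₂ χ χ₁ χ₂ x y ε) (𝓝[>] 0) (𝓝 1) :=
  prop1_subcritical_general s hcont hbdd hs00 z₁ z₂ hz₁ hz₂ x y χ χ₁ χ₂ hχ₁ hχ₂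
end

section
/- Critical case of Proposition 1 with χ₁ < χ₂: Let s : ℝ → ℝ → ℝ be continuous and bounded, let z₁, z₂ > 0, let x, y ≥ 0, and suppose 0 < χ = χ₁ < χ₂. Then lim_{ε→0⁺} s̃_ε(x,y) = s̃*(x,0). -/
open Real MeasureTheory Filter Set Topology

/-- The limiting Laplace transform `s̃*(x,y)`. -/
noncomputable def stildeStar (s : ℝ → ℝ → ℝ) (z₁ z₂ x y : ℝ) : ℝ :=
  ∫ τ in Ioi (0:ℝ), Real.exp (-τ) * s ((x * τ) ^ (1 / z₁)) ((y * τ) ^ (1 / z₂))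

/-!
Since `χ = χ₁`, the first argument of `s` does not depend on `ε`, while the second one is
`(ε ^ (χ₂ - χ) * y * τ) ^ (1 / z₂)` with `χ₂ - χ > 0` and `1 / z₂ > 0`, which tends to `0`.
Continuity of `s` gives pointwise convergence of the integrand, and `|s| ≤ C` gives the
integrable majorant `C * exp (-τ)`, so dominated convergence applies.
-/

theorem tendsto_setIntegral_exp_neg_mul_of_bounded {ι : Type*} {l : Filter ι}
    [l.IsCountablyGenerated] {g : ι → ℝ → ℝ} {g₀ : ℝ → ℝ} {C : ℝ}
    (hmeas : ∀ᶠ i in l, AEStronglyMeasurable (g i) (volume.restrict (Ioi 0)))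
    (hbound : ∀ i τ, |g i τ| ≤ C) (hlim : ∀ τ, Tendsto (fun i => g i τ) l (𝓝 (g₀ τ))) :
    Tendsto (fun i => ∫ τ in Ioi (0:ℝ), exp (-τ) * g i τ) l
      (𝓝 (∫ τ in Ioi (0:ℝ), exp (-τ) * g₀ τ)) := by
  refine tendsto_integral_filter_of_dominated_convergence (fun τ => C * exp (-τ)) ?_ ?_ ?_ ?_
  · filter_upwards [hmeas] with i hi
    exact (continuous_exp.comp continuous_neg).aestronglyMeasurable.mul hi
  · refine Eventually.of_forall fun i => Eventually.of_forall fun τ => ?_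
    rw [norm_mul, norm_of_nonneg (exp_pos _).le, mul_comm, Real.norm_eq_abs]
    exact mul_le_mul_of_nonneg_right (hbound i τ) (exp_pos _).le
  · simpa using (exp_neg_integrableOn_Ioi 0 one_pos).const_mul C
  · exact Eventually.of_forall fun τ => (hlim τ).const_mul _

theorem tendsto_rpow_mul_rpow_nhdsGT_zero {δ p : ℝ} (hδ : 0 < δ) (hp : 0 < p) (c : ℝ) :
    Tendsto (fun ε : ℝ => (ε ^ δ * c) ^ p) (𝓝[>] 0) (𝓝 0) := by
  have hcont : ContinuousAt (fun ε : ℝ => (ε ^ δ * c) ^ p) 0 :=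
    ((continuousAt_id.rpow_const (Or.inr hδ.le)).mul_const c).rpow_const (Or.inr hp.le)
  simpa [zero_rpow hδ.ne', zero_rpow hp.ne'] using hcont.tendsto.mono_left nhdsWithin_le_nhds

theorem prop1_critical_lt_general (s : ℝ → ℝ → ℝ)
    (hcont : Continuous fun p : ℝ × ℝ => s p.1 p.2)
    (hbdd : ∃ C : ℝ, ∀ u v : ℝ, |s u v| ≤ C)
    (z₁ z₂ : ℝ) (hz₂ : 0 < z₂)
    (x y : ℝ)
    (χ χ₁ χ₂ : ℝ) (heq : χ = χ₁) (hlt : χ₁ < χ₂) :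
    Tendsto (fun ε : ℝ => stildeEps s z₁ z₂ χ χ₁ χ₂ x y ε) (𝓝[>] 0)
      (𝓝 (stildeStar s z₁ z₂ x 0)) := by
  obtain ⟨C, hC⟩ := hbdd
  subst heq
  simp only [stildeEps, stildeStar, sub_self, rpow_zero, one_mul, zero_mul]
  refine tendsto_setIntegral_exp_neg_mul_of_bounded (C := C) ?_ (fun _ _ => hC _ _) ?_
  · refine Eventually.of_forall fun ε => Measurable.aestronglyMeasurable ?_
    exact hcont.measurable.comp (((measurable_const_mul x).pow_const _).prodMk
      ((measurable_const_mul _).pow_const _))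
  · intro τ
    have hsecond := tendsto_rpow_mul_rpow_nhdsGT_zero (sub_pos.2 hlt) (one_div_pos.2 hz₂) (y * τ)
    simp only [← mul_assoc] at hsecond
    rw [zero_rpow (one_div_pos.2 hz₂).ne']
    exact hcont.continuousAt.tendsto.comp (tendsto_const_nhds.prodMk_nhds hsecond)

/-- Critical case of Proposition 1 with `χ₁ < χ₂`: for `0 < χ = χ₁ < χ₂`,
`lim_{ε→0⁺} s̃_ε(x,y) = s̃*(x,0)`. -/
theorem prop1_critical_lt (s : ℝ → ℝ → ℝ)
    (hcont : Continuous fun p : ℝ × ℝ => s p.1 p.2)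
    (hbdd : ∃ C : ℝ, ∀ u v : ℝ, |s u v| ≤ C)
    (z₁ z₂ : ℝ) (hz₁ : 0 < z₁) (hz₂ : 0 < z₂)
    (x y : ℝ) (hx : 0 ≤ x) (hy : 0 ≤ y)
    (χ χ₁ χ₂ : ℝ) (hχ : 0 < χ) (heq : χ = χ₁) (hlt : χ₁ < χ₂) :
    Tendsto (fun ε : ℝ => stildeEps s z₁ z₂ χ χ₁ χ₂ x y ε) (𝓝[>] 0)
      (𝓝 (stildeStar s z₁ z₂ x 0)) :=
  prop1_critical_lt_general s hcont hbdd z₁ z₂ hz₂ x y χ χ₁ χ₂ heq hlt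
end

section
/- Critical case of Proposition 1 with χ₁ > χ₂: Let s : ℝ → ℝ → ℝ be continuous and bounded, let z₁, z₂ > 0, let x, y ≥ 0, and suppose 0 < χ = χ₂ < χ₁. Then lim_{ε→0⁺} s̃_ε(x,y) = s̃*(0,y). -/
/-! Since `χ = χ₂`, the second argument of `s` no longer depends on `ε`, while the first one,
`(ε ^ (χ₁ - χ) * x * τ) ^ (1 / z₁)`, tends to `0 ^ (1 / z₁)` because `χ₁ - χ > 0`. As `s` is
bounded and `e^{-τ}` is integrable on `(0, ∞)`, dominated convergence passes the pointwise limit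
under the integral. -/

open Real MeasureTheory Filter Set Topology

theorem tendsto_integral_mul_of_bounded {α ι : Type*} [MeasurableSpace α] {μ : Measure α}
    {l : Filter ι} [l.IsCountablyGenerated] {w : α → ℝ} (hw : Integrable w μ)
    {F : ι → α → ℝ} {f : α → ℝ} {C : ℝ} (hF_meas : ∀ i, AEStronglyMeasurable (F i) μ)
    (hF_bound : ∀ i a, |F i a| ≤ C) (h_lim : ∀ a, Tendsto (fun i => F i a) l (𝓝 (f a))) :
    Tendsto (fun i => ∫ a, w a * F i a ∂μ) l (𝓝 (∫ a, w a * f a ∂μ)) := by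
  refine tendsto_integral_filter_of_dominated_convergence (fun a => |w a| * C)
    (.of_forall fun i => hw.aestronglyMeasurable.mul (hF_meas i))
    (.of_forall fun i => .of_forall fun a => ?_) (hw.abs.mul_const C)
    (.of_forall fun a => (h_lim a).const_mul (w a))
  rw [norm_mul, norm_eq_abs, norm_eq_abs]
  exact mul_le_mul_of_nonneg_left (hF_bound i a) (abs_nonneg _)

theorem tendsto_rpow_mul_nhdsGT_zero {a : ℝ} (ha : 0 < a) (c : ℝ) :
    Tendsto (fun ε : ℝ => ε ^ a * c) (𝓝[>] 0) (𝓝 0) := by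
  have h := ((continuous_rpow_const ha.le).tendsto 0).mul_const c
  rw [zero_rpow ha.ne', zero_mul] at h
  exact h.mono_left nhdsWithin_le_nhds

theorem prop1_critical_gt_general (s : ℝ → ℝ → ℝ)
    (hcont : Continuous fun p : ℝ × ℝ => s p.1 p.2)
    (hbdd : ∃ C : ℝ, ∀ u v : ℝ, |s u v| ≤ C)
    (z₁ z₂ : ℝ) (hz₁ : 0 < z₁)
    (x y : ℝ)
    (χ χ₁ χ₂ : ℝ) (heq : χ = χ₂) (hlt : χ₂ < χ₁) :
    Tendsto (fun ε : ℝ => stildeEps s z₁ z₂ χ χ₁ χ₂ x y ε) (𝓝[>] 0)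
      (𝓝 (stildeStar s z₁ z₂ 0 y)) := by
  subst heq
  obtain ⟨C, hC⟩ := hbdd
  simp only [stildeEps, stildeStar, sub_self, rpow_zero, one_mul, zero_mul]
  refine tendsto_integral_mul_of_bounded (integrableOn_exp_neg_Ioi 0)
    (fun ε => ?_) (fun _ _ => hC _ _) (fun τ => ?_)
  · exact (hcont.measurable.comp (f := fun τ : ℝ =>
      ((ε ^ (χ₁ - χ) * x * τ) ^ (1 / z₁), (y * τ) ^ (1 / z₂))) (by fun_prop)).aestronglyMeasurable
  · have h_first : Tendsto (fun ε : ℝ => (ε ^ (χ₁ - χ) * x * τ) ^ (1 / z₁)) (𝓝[>] 0)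
        (𝓝 ((0 : ℝ) ^ (1 / z₁))) := by
      simpa only [mul_assoc] using
        (tendsto_rpow_mul_nhdsGT_zero (sub_pos.2 hlt) (x * τ)).rpow_const
          (Or.inr (one_div_pos.2 hz₁).le)
    exact (hcont.tendsto _).comp (h_first.prodMk_nhds tendsto_const_nhds)

/-- Critical case of Proposition 1 with `χ₁ > χ₂`: for `0 < χ = χ₂ < χ₁`,
`lim_{ε→0⁺} s̃_ε(x,y) = s̃*(0,y)`. -/
theorem prop1_critical_gt (s : ℝ → ℝ → ℝ)
    (hcont : Continuous fun p : ℝ × ℝ => s p.1 p.2)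
    (hbdd : ∃ C : ℝ, ∀ u v : ℝ, |s u v| ≤ C)
    (z₁ z₂ : ℝ) (hz₁ : 0 < z₁) (hz₂ : 0 < z₂)
    (x y : ℝ) (hx : 0 ≤ x) (hy : 0 ≤ y)
    (χ χ₁ χ₂ : ℝ) (hχ : 0 < χ) (heq : χ = χ₂) (hlt : χ₂ < χ₁) :
    Tendsto (fun ε : ℝ => stildeEps s z₁ z₂ χ χ₁ χ₂ x y ε) (𝓝[>] 0)
      (𝓝 (stildeStar s z₁ z₂ 0 y)) :=
  prop1_critical_gt_general s hcont hbdd z₁ z₂ hz₁ x y χ χ₁ χ₂ heq hlt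
end
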